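/- arXiv:1707.07981 — 2 statements merged into one kernel-verified Lean document; each statement's English description precedes it below -/
import Mathlib

section
/- Let Ψ be a closed subroot system of the untwisted affine root system Φ such that Gr(Ψ) is irreducible. Then the difference set {r − r′ : r, r′ ∈ Z_α(Ψ)} is the same for all α ∈ Gr(Ψ); that is, {r − r′ : r, r′ ∈ Z_α(Ψ)} = {r − r′ : r, r′ ∈ Z_β(Ψ)} for all α, β ∈ Gr(Ψ). -/
noncomputable section

variable {V : Type*} [NormedAddCommGroup V] [InnerProductSpace ℝ V]

/-- The Cartan pairing `⟨β, α∨⟩ = 2(β,α)/(α,α)`. -/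
def cartanPair (α β : V) : ℝ := 2 * (inner ℝ β α : ℝ) / (inner ℝ α α : ℝ)

/-- The reflection `s_α` on `V`: `s_α(β) = β - ⟨β,α∨⟩ α`. -/
def reflV (α β : V) : V := β - cartanPair α β • α

/-- The affine reflection `s_x` on `V × ℝ` with respect to the bilinear form
`B((x,a),(y,b)) = (x,y)`. -/
def reflA (x y : V × ℝ) : V × ℝ :=
  y - (2 * (inner ℝ y.1 x.1 : ℝ) / (inner ℝ x.1 x.1 : ℝ)) • x

/-- A finite irreducible reduced crystallographic root system in `V`. -/
structure IsIrreducibleRootSystem (R : Set V) : Prop where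
  finite : R.Finite
  spans : Submodule.span ℝ R = ⊤
  zero_notMem : (0 : V) ∉ R
  reduced : ∀ α ∈ R, ∀ c : ℝ, c • α ∈ R → c = 1 ∨ c = -1
  cartan_int : ∀ α ∈ R, ∀ β ∈ R, ∃ n : ℤ, cartanPair α β = (n : ℝ)
  refl_mem : ∀ α ∈ R, ∀ β ∈ R, reflV α β ∈ R
  irred : ∀ A B : Set V, R = A ∪ B → A.Nonempty → B.Nonempty →
    ∃ a ∈ A, ∃ b ∈ B, (inner ℝ a b : ℝ) ≠ 0

/-- A subroot system of a set `Φ` of affine roots: a nonempty proper subset stable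
under the reflections `s_x`, `x ∈ Ψ`. -/
def IsSubrootSystem (Φ Ψ : Set (V × ℝ)) : Prop :=
  Ψ.Nonempty ∧ Ψ ⊆ Φ ∧ Ψ ≠ Φ ∧ ∀ x ∈ Ψ, ∀ y ∈ Ψ, reflA x y ∈ Ψ

/-- `Ψ` is closed in `Φ`. -/
def IsClosedIn (Φ Ψ : Set (V × ℝ)) : Prop := ∀ x ∈ Ψ, ∀ y ∈ Ψ, x + y ∈ Φ → x + y ∈ Ψ

def IsClosedSubrootSystem (Φ Ψ : Set (V × ℝ)) : Prop :=
  IsSubrootSystem Φ Ψ ∧ IsClosedIn Φ Ψ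

/-- A maximal closed subroot system of `Φ`: any closed subroot system of `Φ`
containing it equals it. -/
def IsMaximalClosedSubrootSystem (Φ Ψ : Set (V × ℝ)) : Prop :=
  IsClosedSubrootSystem Φ Ψ ∧ ∀ Δ, IsClosedSubrootSystem Φ Δ → Ψ ⊆ Δ → Δ = Ψ

/-- A subroot system of a finite root system `R`. -/
def IsSubrootSystemF (R S : Set V) : Prop :=
  S.Nonempty ∧ S ⊆ R ∧ S ≠ R ∧ ∀ α ∈ S, ∀ β ∈ S, reflV α β ∈ S

/-- `S` is closed in the finite root system `R`. -/
def IsClosedInF (R S : Set V) : Prop := ∀ α ∈ S, ∀ β ∈ S, α + β ∈ R → α + β ∈ S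

def IsMaximalClosedSubrootSystemF (R S : Set V) : Prop :=
  (IsSubrootSystemF R S ∧ IsClosedInF R S) ∧
    ∀ T, IsSubrootSystemF R T → IsClosedInF R T → S ⊆ T → T = S

/-- A `ℤ`-linear function on `S`: the restriction to `S` of an additive group
homomorphism from the subgroup of `V` generated by `S` to `ℤ`. -/
def IsZLinearOn (S : Set V) (p : V → ℤ) : Prop :=
  ∃ f : AddSubgroup.closure S →+ ℤ,
    ∀ α, ∀ h : α ∈ S, p α = f ⟨α, AddSubgroup.subset_closure h⟩

/-- An irreducible subset: nonempty and not a union of two nonempty mutually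
orthogonal subsets. -/
def IsIrreducibleSubset (S : Set V) : Prop :=
  S.Nonempty ∧ ∀ A B : Set V, S = A ∪ B → A.Nonempty → B.Nonempty →
    ∃ a ∈ A, ∃ b ∈ B, (inner ℝ a b : ℝ) ≠ 0

/-- The untwisted affine root system attached to `R`. -/
def affineRS (R : Set V) : Set (V × ℝ) := {x | x.1 ∈ R ∧ ∃ r : ℤ, x.2 = (r : ℝ)}

/-- The gradient of a set of affine roots. -/
def Gr (Ψ : Set (V × ℝ)) : Set V := {α | ∃ r : ℤ, (α, (r : ℝ)) ∈ Ψ}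

/-- `Z_α(Ψ) = {r ∈ ℤ : α + rδ ∈ Ψ}`. -/
def ZSet (Ψ : Set (V × ℝ)) (α : V) : Set ℤ := {r | (α, (r : ℝ)) ∈ Ψ}

/-- The difference set `{r - r' : r, r' ∈ Z_α(Ψ)}`. -/
def DiffSet (Ψ : Set (V × ℝ)) (α : V) : Set ℤ :=
  {d | ∃ r ∈ ZSet Ψ α, ∃ r' ∈ ZSet Ψ α, d = r - r'}

/-- The lift `Ŝ = {α + rδ : α ∈ S, r ∈ ℤ}` of a subset `S` of the finite root system. -/
def liftF (S : Set V) : Set (V × ℝ) := {x | x.1 ∈ S ∧ ∃ r : ℤ, x.2 = (r : ℝ)}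

/-! Reflecting in an affine root `γ + rδ ∈ Ψ` maps `Z_μ(Ψ)` into `Z_{s_γ μ}(Ψ)` by a translation,
and so does adding `β + sδ ∈ Ψ` from `Z_α(Ψ)` into `Z_{α+β}(Ψ)` when `α + β` is a root;
translations preserve difference sets. For `α, β ∈ Gr Ψ` with `(α, β) < 0` and `α ≠ -β`, the
bound `⟨α, β∨⟩⟨β, α∨⟩ < 4` leaves three rank-two cases, and in each of them `s_β α = β + γ` for
some `γ ∈ Gr Ψ`; hence the difference set of `β` lies in that of `s_β α`, which is that of `α`.
Replacing `β` by `-β = s_β β` handles `(α, β) > 0`, and irreducibility of `Gr Ψ` spreads the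
resulting equality along chains of non-orthogonal roots. -/

open RealInnerProductSpace

section CartanPair

variable {α β : V}

lemma cartanPair_self (hα : α ≠ 0) : cartanPair α α = 2 := by
  have : ⟪α, α⟫ ≠ 0 := inner_self_ne_zero.2 hα
  simp only [cartanPair]
  field_simp

lemma reflV_self (hα : α ≠ 0) : reflV α α = -α := by
  rw [reflV, cartanPair_self hα]
  module

lemma cartanPair_reflV (hα : α ≠ 0) (β : V) : cartanPair α (reflV α β) = -cartanPair α β := by
  have : ⟪α, α⟫ ≠ 0 := inner_self_ne_zero.2 hα
  simp only [cartanPair, reflV, inner_sub_left, real_inner_smul_left]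
  field_simp
  ring

lemma reflV_reflV (hα : α ≠ 0) (β : V) : reflV α (reflV α β) = β := by
  rw [reflV, cartanPair_reflV hα, reflV]
  module

lemma reflA_mk (γ μ : V) (r s : ℝ) :
    reflA (γ, r) (μ, s) = (reflV γ μ, s - cartanPair γ μ * r) := by
  simp only [reflA, reflV, cartanPair, Prod.smul_mk, Prod.mk_sub_mk, smul_eq_mul]

lemma reflV_eq_add_smul {n : ℝ} (h : cartanPair β α = -n) : reflV β α = α + n • β := by
  rw [reflV, h]
  module

lemma reflV_eq_add (h : cartanPair β α = -1) : reflV β α = α + β := by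
  rw [reflV_eq_add_smul h, one_smul]

lemma inner_self_ne_zero_of_cartanPair_ne_zero (h : cartanPair α β ≠ 0) : ⟪α, α⟫ ≠ 0 :=
  fun h0 => h (by rw [cartanPair, h0, div_zero])

/-- The Cauchy–Schwarz equality case, in terms of Cartan numbers. -/
lemma two_smul_eq_cartanPair_smul (h : cartanPair α β * cartanPair β α = 4) :
    (2 : ℝ) • α = cartanPair β α • β := by
  have h0 : cartanPair α β * cartanPair β α ≠ 0 := by rw [h]; norm_num
  have ha := inner_self_ne_zero_of_cartanPair_ne_zero (left_ne_zero_of_mul h0)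
  have hb := inner_self_ne_zero_of_cartanPair_ne_zero (right_ne_zero_of_mul h0)
  have hsq : ⟪α, β⟫ * ⟪α, β⟫ = ⟪α, α⟫ * ⟪β, β⟫ := by
    rw [cartanPair, cartanPair, real_inner_comm α β] at h
    field_simp at h
    linarith
  set m := cartanPair β α with hm_def
  have hm : m * ⟪β, β⟫ = 2 * ⟪α, β⟫ := by
    rw [hm_def, cartanPair, div_mul_cancel₀ _ hb]
  have hmp : m * ⟪α, β⟫ = 2 * ⟪α, α⟫ := by
    rw [hm_def, cartanPair]
    field_simp
    linear_combination hsq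
  rw [← sub_eq_zero, ← inner_self_eq_zero (𝕜 := ℝ)]
  simp only [inner_sub_left, inner_sub_right, real_inner_smul_left, real_inner_smul_right,
    real_inner_comm α β]
  linear_combination m * hm - 2 * hmp

lemma cartanPair_add_eq_neg_one (h₁ : cartanPair α β = -1) (h₂ : cartanPair β α = -3) :
    cartanPair (β + α) β = -1 := by
  have ha := inner_self_ne_zero_of_cartanPair_ne_zero (α := α) (by rw [h₁]; norm_num)
  have hb := inner_self_ne_zero_of_cartanPair_ne_zero (α := β) (by rw [h₂]; norm_num)
  rw [cartanPair, div_eq_iff ha, real_inner_comm α β] at h₁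
  rw [cartanPair, div_eq_iff hb] at h₂
  have hab : ⟪β + α, β + α⟫ = ⟪β, β⟫ := by
    simp only [inner_add_left, inner_add_right, real_inner_comm α β]
    linarith
  rw [cartanPair, hab, div_eq_iff hb, inner_add_right, real_inner_comm α β]
  linarith

end CartanPair

namespace IsIrreducibleRootSystem

variable {R : Set V} {α β : V}

lemma ne_zero (hR : IsIrreducibleRootSystem R) (hα : α ∈ R) : α ≠ 0 :=
  fun h => hR.zero_notMem (h ▸ hα)

lemma cartanPair_neg (hR : IsIrreducibleRootSystem R) (hα : α ∈ R) (hneg : ⟪α, β⟫ < 0) :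
    cartanPair α β < 0 := by
  rw [cartanPair, real_inner_comm]
  exact div_neg_of_neg_of_pos (by linarith) (real_inner_self_pos.2 (hR.ne_zero hα))

lemma cartanPair_mul_cartanPair_lt_four (hR : IsIrreducibleRootSystem R) (hα : α ∈ R)
    (hβ : β ∈ R) (hneg : ⟪α, β⟫ < 0) (hne : α + β ≠ 0) : cartanPair α β * cartanPair β α < 4 := by
  refine lt_of_le_of_ne ?_ fun h4 => ?_
  · have hCS := real_inner_mul_inner_self_le α β
    have ha := real_inner_self_pos.2 (hR.ne_zero hα)
    have hb := real_inner_self_pos.2 (hR.ne_zero hβ)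
    rw [cartanPair, cartanPair, real_inner_comm α β, div_mul_div_comm,
      div_le_iff₀ (mul_pos ha hb)]
    nlinarith
  · have hαβ : α = (cartanPair β α / 2) • β := by
      rw [div_eq_inv_mul, mul_smul, ← two_smul_eq_cartanPair_smul h4, smul_smul]
      norm_num
    rcases hR.reduced β hβ _ (hαβ ▸ hα) with h | h <;> rw [h] at hαβ
    · rw [one_smul] at hαβ
      have := real_inner_self_pos.2 (hR.ne_zero hβ)
      rw [hαβ] at hneg
      linarith
    · exact hne (by rw [hαβ, neg_one_smul, neg_add_cancel])

lemma cartanPair_cases (hR : IsIrreducibleRootSystem R) (hα : α ∈ R) (hβ : β ∈ R)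
    (hneg : ⟪α, β⟫ < 0) (hne : α + β ≠ 0) :
    cartanPair β α = -1 ∨
      cartanPair α β = -1 ∧ (cartanPair β α = -2 ∨ cartanPair β α = -3) := by
  obtain ⟨m, hm⟩ := hR.cartan_int α hα β hβ
  obtain ⟨n, hn⟩ := hR.cartan_int β hβ α hα
  have hm_neg : m < 0 := by exact_mod_cast hm ▸ hR.cartanPair_neg hα hneg
  have hn_neg : n < 0 := by
    exact_mod_cast hn ▸ hR.cartanPair_neg hβ (by rwa [real_inner_comm])
  have hmn : m * n < 4 := by
    exact_mod_cast hm ▸ hn ▸ hR.cartanPair_mul_cartanPair_lt_four hα hβ hneg hne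
  have : -3 ≤ m := by nlinarith
  have : -3 ≤ n := by nlinarith
  rw [hm, hn]
  norm_cast
  interval_cases m <;> interval_cases n <;> omega

end IsIrreducibleRootSystem

section Translation

variable {E : Type*} {R : Set E} {Ψ : Set (E × ℝ)} {α β : E}

lemma mem_of_mem_gr (hΨ : Ψ ⊆ affineRS R) (hα : α ∈ Gr Ψ) : α ∈ R :=
  let ⟨_, hr⟩ := hα; (hΨ hr).1

lemma diffSet_subset_of_forall_add_mem (c : ℤ) (h : ∀ r ∈ ZSet Ψ α, r + c ∈ ZSet Ψ β) :
    DiffSet Ψ α ⊆ DiffSet Ψ β := by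
  rintro _ ⟨r, hr, r', hr', rfl⟩
  exact ⟨r + c, h r hr, r' + c, h r' hr', by ring⟩

lemma diffSet_subset_diffSet_add [NormedAddCommGroup E] (hΨ : IsClosedIn (affineRS R) Ψ)
    (hβ : β ∈ Gr Ψ) (hαβ : α + β ∈ R) : DiffSet Ψ α ⊆ DiffSet Ψ (α + β) := by
  obtain ⟨s, hs⟩ := hβ
  refine diffSet_subset_of_forall_add_mem s fun r hr => ?_
  have hsum : (α, (r : ℝ)) + (β, (s : ℝ)) = (α + β, ((r + s : ℤ) : ℝ)) := by
    rw [Prod.mk_add_mk, Int.cast_add]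
  have h := hΨ _ hr _ hs (hsum ▸ ⟨hαβ, _, rfl⟩)
  rwa [hsum] at h

end Translation

section Gradient

variable {R : Set V} {Ψ : Set (V × ℝ)} {α β γ μ : V}

lemma sub_mul_mem_zSet_reflV (hΨ : IsSubrootSystem (affineRS R) Ψ) {r s n : ℤ}
    (hr : r ∈ ZSet Ψ γ) (hs : s ∈ ZSet Ψ μ) (hn : cartanPair γ μ = n) :
    s - n * r ∈ ZSet Ψ (reflV γ μ) := by
  have h := hΨ.2.2.2 _ hr _ hs
  rwa [reflA_mk, hn, ← Int.cast_mul, ← Int.cast_sub] at h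

lemma reflV_mem_gr (hR : IsIrreducibleRootSystem R) (hΨ : IsSubrootSystem (affineRS R) Ψ)
    (hγ : γ ∈ Gr Ψ) (hμ : μ ∈ Gr Ψ) : reflV γ μ ∈ Gr Ψ := by
  obtain ⟨r, hr⟩ := hγ
  obtain ⟨s, hs⟩ := hμ
  obtain ⟨n, hn⟩ :=
    hR.cartan_int γ (mem_of_mem_gr hΨ.2.1 ⟨r, hr⟩) μ (mem_of_mem_gr hΨ.2.1 ⟨s, hs⟩)
  exact ⟨_, sub_mul_mem_zSet_reflV hΨ hr hs hn⟩

lemma diffSet_subset_diffSet_reflV (hR : IsIrreducibleRootSystem R)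
    (hΨ : IsSubrootSystem (affineRS R) Ψ) (hγ : γ ∈ Gr Ψ) (hμ : μ ∈ Gr Ψ) :
    DiffSet Ψ μ ⊆ DiffSet Ψ (reflV γ μ) := by
  obtain ⟨r, hr⟩ := hγ
  obtain ⟨n, hn⟩ :=
    hR.cartan_int γ (mem_of_mem_gr hΨ.2.1 ⟨r, hr⟩) μ (mem_of_mem_gr hΨ.2.1 hμ)
  refine diffSet_subset_of_forall_add_mem (-(n * r)) fun s hs => ?_
  simpa only [sub_eq_add_neg] using sub_mul_mem_zSet_reflV hΨ hr hs hn

lemma diffSet_reflV (hR : IsIrreducibleRootSystem R) (hΨ : IsSubrootSystem (affineRS R) Ψ)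
    (hγ : γ ∈ Gr Ψ) (hμ : μ ∈ Gr Ψ) :
    DiffSet Ψ (reflV γ μ) = DiffSet Ψ μ := by
  refine (diffSet_subset_diffSet_reflV hR hΨ hγ hμ).antisymm' ?_
  have h := diffSet_subset_diffSet_reflV hR hΨ hγ (reflV_mem_gr hR hΨ hγ hμ)
  rwa [reflV_reflV (hR.ne_zero (mem_of_mem_gr hΨ.2.1 hγ))] at h

lemma neg_mem_gr (hR : IsIrreducibleRootSystem R) (hΨ : IsSubrootSystem (affineRS R) Ψ)
    (hμ : μ ∈ Gr Ψ) : -μ ∈ Gr Ψ := by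
  simpa only [reflV_self (hR.ne_zero (mem_of_mem_gr hΨ.2.1 hμ))] using
    reflV_mem_gr hR hΨ hμ hμ

lemma diffSet_neg (hR : IsIrreducibleRootSystem R) (hΨ : IsSubrootSystem (affineRS R) Ψ)
    (hμ : μ ∈ Gr Ψ) : DiffSet Ψ (-μ) = DiffSet Ψ μ := by
  simpa only [reflV_self (hR.ne_zero (mem_of_mem_gr hΨ.2.1 hμ))] using
    diffSet_reflV hR hΨ hμ hμ

lemma diffSet_subset_of_add_eq_reflV (hR : IsIrreducibleRootSystem R)
    (hΨ : IsClosedSubrootSystem (affineRS R) Ψ) (hα : α ∈ Gr Ψ) (hβ : β ∈ Gr Ψ)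
    (hγ : γ ∈ Gr Ψ) (h : β + γ = reflV β α) : DiffSet Ψ β ⊆ DiffSet Ψ α := by
  have hsum : β + γ ∈ R := mem_of_mem_gr hΨ.1.2.1 (h ▸ reflV_mem_gr hR hΨ.1 hβ hα)
  calc DiffSet Ψ β ⊆ DiffSet Ψ (β + γ) := diffSet_subset_diffSet_add hΨ.2 hγ hsum
    _ = DiffSet Ψ α := by rw [h, diffSet_reflV hR hΨ.1 hβ hα]

lemma diffSet_subset_of_inner_neg (hR : IsIrreducibleRootSystem R)
    (hΨ : IsClosedSubrootSystem (affineRS R) Ψ) (hα : α ∈ Gr Ψ) (hβ : β ∈ Gr Ψ)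
    (hneg : ⟪α, β⟫ < 0) (hne : α + β ≠ 0) : DiffSet Ψ β ⊆ DiffSet Ψ α := by
  rcases hR.cartanPair_cases (mem_of_mem_gr hΨ.1.2.1 hα) (mem_of_mem_gr hΨ.1.2.1 hβ) hneg hne
    with h | ⟨h₁, h | h⟩
  · exact diffSet_subset_of_add_eq_reflV hR hΨ hα hβ hα (by rw [reflV_eq_add h, add_comm])
  · have hγ : β + α ∈ Gr Ψ := reflV_eq_add h₁ ▸ reflV_mem_gr hR hΨ.1 hα hβ
    refine diffSet_subset_of_add_eq_reflV hR hΨ hα hβ hγ ?_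
    rw [reflV_eq_add_smul (n := 2) (by rw [h])]
    module
  · have hγ₁ : β + α ∈ Gr Ψ := reflV_eq_add h₁ ▸ reflV_mem_gr hR hΨ.1 hα hβ
    have hγ₂ : β + (β + α) ∈ Gr Ψ :=
      reflV_eq_add (cartanPair_add_eq_neg_one h₁ h) ▸ reflV_mem_gr hR hΨ.1 hγ₁ hβ
    refine diffSet_subset_of_add_eq_reflV hR hΨ hα hβ hγ₂ ?_
    rw [reflV_eq_add_smul (n := 3) (by rw [h])]
    module

lemma diffSet_eq_of_inner_neg (hR : IsIrreducibleRootSystem R)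
    (hΨ : IsClosedSubrootSystem (affineRS R) Ψ) (hα : α ∈ Gr Ψ) (hβ : β ∈ Gr Ψ)
    (hneg : ⟪α, β⟫ < 0) : DiffSet Ψ α = DiffSet Ψ β := by
  by_cases hne : α + β = 0
  · rw [eq_neg_of_add_eq_zero_right hne, diffSet_neg hR hΨ.1 hα]
  · refine (diffSet_subset_of_inner_neg hR hΨ hα hβ hneg hne).antisymm' ?_
    exact diffSet_subset_of_inner_neg hR hΨ hβ hα (by rwa [real_inner_comm])
      (by rwa [add_comm])

lemma diffSet_eq_of_inner_ne_zero (hR : IsIrreducibleRootSystem R)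
    (hΨ : IsClosedSubrootSystem (affineRS R) Ψ) (hα : α ∈ Gr Ψ) (hβ : β ∈ Gr Ψ)
    (hαβ : ⟪α, β⟫ ≠ 0) : DiffSet Ψ α = DiffSet Ψ β := by
  rcases hαβ.lt_or_gt with hneg | hpos
  · exact diffSet_eq_of_inner_neg hR hΨ hα hβ hneg
  · rw [← diffSet_neg hR hΨ.1 hβ]
    exact diffSet_eq_of_inner_neg hR hΨ hα (neg_mem_gr hR hΨ.1 hβ)
      (by rwa [inner_neg_right, neg_lt_zero])

end Gradient

lemma IsIrreducibleSubset.apply_eq_of_inner_ne_zero {S : Set V} (hS : IsIrreducibleSubset S)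
    {X : Type*} (f : V → X) (hf : ∀ a ∈ S, ∀ b ∈ S, ⟪a, b⟫ ≠ 0 → f a = f b)
    {a b : V} (ha : a ∈ S) (hb : b ∈ S) : f a = f b := by
  by_contra hab
  obtain ⟨x, hx, y, hy, hxy⟩ := hS.2 {x ∈ S | f x = f a} {x ∈ S | f x ≠ f a}
    (by rw [← Set.sep_or]; simp only [em, Set.sep_true]) ⟨a, ha, rfl⟩ ⟨b, hb, Ne.symm hab⟩
  exact hy.2 ((hf x hx.1 y hy.1 hxy).symm.trans hx.2)

theorem statement1_general
    {V : Type*} [NormedAddCommGroup V] [InnerProductSpace ℝ V]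
    (R : Set V) (hR : IsIrreducibleRootSystem R)
    (Ψ : Set (V × ℝ)) (hΨ : IsClosedSubrootSystem (affineRS R) Ψ)
    (hirr : IsIrreducibleSubset (Gr Ψ)) :
    ∀ α ∈ Gr Ψ, ∀ β ∈ Gr Ψ, DiffSet Ψ α = DiffSet Ψ β :=
  fun _ hα _ hβ => hirr.apply_eq_of_inner_ne_zero (DiffSet Ψ)
    (fun _ ha _ hb => diffSet_eq_of_inner_ne_zero hR hΨ ha hb) hα hβ

/-- For a closed subroot system `Ψ` of the untwisted affine root
system with irreducible gradient, the difference sets of the `Z_α(Ψ)` all agree. -/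
theorem statement1
    {V : Type*} [NormedAddCommGroup V] [InnerProductSpace ℝ V] [FiniteDimensional ℝ V]
    (R : Set V) (hR : IsIrreducibleRootSystem R)
    (Ψ : Set (V × ℝ)) (hΨ : IsClosedSubrootSystem (affineRS R) Ψ)
    (hirr : IsIrreducibleSubset (Gr Ψ)) :
    ∀ α ∈ Gr Ψ, ∀ β ∈ Gr Ψ, DiffSet Ψ α = DiffSet Ψ β :=
  statement1_general R hR Ψ hΨ hirr
end
end

section
/- Let Φ be the untwisted affine root system of Φ̊. (1) If Ψ is a closed subroot system of Φ, then Gr(Ψ) is closed in Φ̊, i.e., α, β ∈ Gr(Ψ) and α + β ∈ Φ̊ imply α + β ∈ Gr(Ψ). (2) If Ψ is a maximal closed subroot system of Φ, then either Gr(Ψ) = Φ̊, or Gr(Ψ) is a maximal closed subroot system of Φ̊ and Ψ equals the lift of Gr(Ψ). -/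
noncomputable section

variable {V : Type*} [NormedAddCommGroup V] [InnerProductSpace ℝ V]

/-!
A closed subroot system `Ψ` sits inside the lift of its gradient, and both the closedness and
the reflection-stability of `Ψ` descend to `Gr Ψ` because `Gr` only forgets the `δ`-coordinate.
Conversely, by integrality of the Cartan pairing, the lift of a closed subroot system of `Φ̊` is a
closed subroot system of `Φ`. So when `Gr Ψ ≠ Φ̊`, maximality forces `Ψ = liftF (Gr Ψ)`, and any
closed subroot system `T ⊇ Gr Ψ` of `Φ̊` gives `liftF T ⊇ Ψ`, whence `T = Gr (liftF T) = Gr Ψ`.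
-/

section GradientAndLift

variable {V : Type*}

lemma fst_mem_gr {Ψ : Set (V × ℝ)} {R : Set V} (hΨ : Ψ ⊆ affineRS R) {x : V × ℝ}
    (hx : x ∈ Ψ) : x.1 ∈ Gr Ψ := by
  obtain ⟨-, r, hr⟩ := hΨ hx
  exact ⟨r, by rwa [← hr]⟩

lemma gr_subset {Ψ : Set (V × ℝ)} {R : Set V} (hΨ : Ψ ⊆ affineRS R) : Gr Ψ ⊆ R :=
  fun _ ⟨_, hr⟩ ↦ (hΨ hr).1

lemma subset_liftF_gr {Ψ : Set (V × ℝ)} {R : Set V} (hΨ : Ψ ⊆ affineRS R) :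
    Ψ ⊆ liftF (Gr Ψ) :=
  fun _ hx ↦ ⟨fst_mem_gr hΨ hx, (hΨ hx).2⟩

@[simp]
lemma gr_liftF (S : Set V) : Gr (liftF S) = S :=
  Set.ext fun _ ↦ ⟨fun ⟨_, hr, _⟩ ↦ hr, fun h ↦ ⟨0, h, 0, rfl⟩⟩

lemma liftF_injective : Function.Injective (liftF : Set V → Set (V × ℝ)) :=
  fun S T h ↦ by rw [← gr_liftF S, h, gr_liftF]

lemma liftF_mono {S T : Set V} (h : S ⊆ T) : liftF S ⊆ liftF T :=
  fun _ ⟨h1, h2⟩ ↦ ⟨h h1, h2⟩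

lemma isClosedInF_gr [NormedAddCommGroup V] {R : Set V} {Ψ : Set (V × ℝ)}
    (hΨ : IsClosedIn (affineRS R) Ψ) : IsClosedInF R (Gr Ψ) := by
  rintro α ⟨r, hr⟩ β ⟨s, hs⟩ hαβ
  have hsum : ((α, (r : ℝ)) + (β, (s : ℝ)) : V × ℝ) = (α + β, ((r + s : ℤ) : ℝ)) := by
    push_cast; rfl
  exact ⟨r + s, hsum ▸ hΨ _ hr _ hs (hsum ▸ ⟨hαβ, r + s, rfl⟩)⟩

end GradientAndLift

section AffineGradient

variable {V : Type*} [NormedAddCommGroup V] [InnerProductSpace ℝ V]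

lemma reflA_mk_s3 (α β : V) (a b : ℝ) :
    reflA (α, a) (β, b) = (reflV α β, b - cartanPair α β * a) := by
  simp [reflA, reflV, cartanPair, smul_eq_mul]

lemma reflV_mem_gr_s3 {R : Set V} {Ψ : Set (V × ℝ)} (hΨ : IsSubrootSystem (affineRS R) Ψ)
    {α β : V} (hα : α ∈ Gr Ψ) (hβ : β ∈ Gr Ψ) : reflV α β ∈ Gr Ψ := by
  obtain ⟨⟨r, hr⟩, ⟨s, hs⟩⟩ := And.intro hα hβ
  simpa [reflA_mk_s3] using fst_mem_gr hΨ.2.1 (hΨ.2.2.2 _ hr _ hs)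

lemma isSubrootSystemF_gr {R : Set V} {Ψ : Set (V × ℝ)} (hΨ : IsSubrootSystem (affineRS R) Ψ)
    (hR : Gr Ψ ≠ R) : IsSubrootSystemF R (Gr Ψ) :=
  ⟨let ⟨_, hx⟩ := hΨ.1; ⟨_, fst_mem_gr hΨ.2.1 hx⟩, gr_subset hΨ.2.1, hR,
    fun _ hα _ hβ ↦ reflV_mem_gr_s3 hΨ hα hβ⟩

lemma isClosedSubrootSystem_liftF {R S : Set V}
    (hcartan : ∀ α ∈ R, ∀ β ∈ R, ∃ n : ℤ, cartanPair α β = n)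
    (hS : IsSubrootSystemF R S) (hSc : IsClosedInF R S) :
    IsClosedSubrootSystem (affineRS R) (liftF S) := by
  obtain ⟨⟨α, hα⟩, hSR, hSne, hrefl⟩ := hS
  -- `affineRS R` is `liftF R` by definition.
  refine ⟨⟨⟨(α, 0), hα, 0, by simp⟩, liftF_mono hSR,
    fun h ↦ hSne (liftF_injective h), ?_⟩, ?_⟩
  · rintro ⟨β, _⟩ ⟨hβ, r, rfl⟩ ⟨γ, _⟩ ⟨hγ, s, rfl⟩
    obtain ⟨n, hn⟩ := hcartan β (hSR hβ) γ (hSR hγ)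
    rw [reflA_mk_s3, hn]
    exact ⟨hrefl _ hβ _ hγ, s - n * r, by push_cast; ring⟩
  · rintro ⟨β, _⟩ ⟨hβ, r, rfl⟩ ⟨γ, _⟩ ⟨hγ, s, rfl⟩ ⟨hβγ, -⟩
    exact ⟨hSc _ hβ _ hγ hβγ, r + s, by push_cast; rfl⟩

end AffineGradient

theorem statement3_general
    {V : Type*} [NormedAddCommGroup V] [InnerProductSpace ℝ V]
    (R : Set V) (hR : IsIrreducibleRootSystem R) :
    (∀ Ψ : Set (V × ℝ), IsClosedSubrootSystem (affineRS R) Ψ →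
        IsClosedInF R (Gr Ψ)) ∧
    (∀ Ψ : Set (V × ℝ), IsMaximalClosedSubrootSystem (affineRS R) Ψ →
        Gr Ψ = R ∨
          (IsMaximalClosedSubrootSystemF R (Gr Ψ) ∧ Ψ = liftF (Gr Ψ))) := by
  refine ⟨fun Ψ hΨ ↦ isClosedInF_gr hΨ.2, fun Ψ ⟨⟨hsub, hcl⟩, hmax⟩ ↦ ?_⟩
  refine or_iff_not_imp_left.2 fun hGR ↦ ?_
  have hGsub := isSubrootSystemF_gr hsub hGR
  have hGcl := isClosedInF_gr hcl
  have hΨ : liftF (Gr Ψ) = Ψ :=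
    hmax _ (isClosedSubrootSystem_liftF hR.cartan_int hGsub hGcl) (subset_liftF_gr hsub.2.1)
  refine ⟨⟨⟨hGsub, hGcl⟩, fun T hT hTcl hGT ↦ ?_⟩, hΨ.symm⟩
  have hTΨ : liftF T = Ψ :=
    hmax _ (isClosedSubrootSystem_liftF hR.cartan_int hT hTcl) (hΨ ▸ liftF_mono hGT)
  rw [← gr_liftF T, hTΨ]

/-- (1) The gradient of a closed subroot system of the untwisted
affine root system is closed in `Φ̊`. (2) For a maximal closed subroot system `Ψ`,
either `Gr(Ψ) = Φ̊`, or `Gr(Ψ)` is a maximal closed subroot system of `Φ̊` and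
`Ψ` equals the lift of `Gr(Ψ)`. -/
theorem statement3
    {V : Type*} [NormedAddCommGroup V] [InnerProductSpace ℝ V] [FiniteDimensional ℝ V]
    (R : Set V) (hR : IsIrreducibleRootSystem R) :
    (∀ Ψ : Set (V × ℝ), IsClosedSubrootSystem (affineRS R) Ψ →
        IsClosedInF R (Gr Ψ)) ∧
    (∀ Ψ : Set (V × ℝ), IsMaximalClosedSubrootSystem (affineRS R) Ψ →
        Gr Ψ = R ∨
          (IsMaximalClosedSubrootSystemF R (Gr Ψ) ∧ Ψ = liftF (Gr Ψ))) :=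
  statement3_general R hR
end
end
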